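/- arXiv:0903.0530 — 4 statements merged into one kernel-verified Lean document; each statement's English description precedes it below -/
import Mathlib

section
/- Let k ≥ 2 be an integer, a ≥ 1, b ≥ 0 integers with gcd(a,b)=1, and let p ≤ k be a prime with p ∤ a and v_p(k+1) < e_{p,k}, where e_{p,k} = ⌊log_p k⌋. Then p^{e_{p,k}-1} is not a period of n ↦ v_p(g_{k,a,b}(n)); i.e., there exists a positive integer n_0 with v_p(g_{k,a,b}(n_0 + p^{e_{p,k}-1})) ≠ v_p(g_{k,a,b}(n_0)). -/
/-!
Write `ν m = v_p(b + m a)`, so that `v_p(g n) = ∑_{i ≤ k} ν (n + i) - max_{i ≤ k} ν (n + i)`,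
and let `e = e_{p,k}`, `t = p^(e-1)`. As `p ∤ a`, among `p^J` consecutive values of `m` at most
one has `p^J ∣ b + m a`. Choose `n` and `t ≤ d < p^e` with `p^k ∣ b + (n + d) a`: then `ν (n + d)`
is the maximum over both windows `[n, n + k]` and `[n + t, n + t + k]`, so shifting by `t` changes
`v_p(g)` by `∑_{i<t} ν (n + k + 1 + i) - ∑_{i<t} ν (n + i)`.
The truncation `min ν (e - 1)` is `t`-periodic, so the two fringes can only differ above level
`e - 1`. In the left fringe `ν < e`, since `n + d` is the only nearby `m` with `p^e ∣ b + m a`;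
since `p^e ∤ k + 1`, `d` can be chosen so that the right fringe contains an `m ≡ n + d (mod p^e)`,
where `ν m ≥ e`.
-/

open Finset

theorem Function.Periodic.sum_range_add {M : Type*} [AddCommMonoid M] {g : ℕ → M} {t : ℕ}
    (hg : Function.Periodic g t) (n : ℕ) : ∑ i ∈ range t, g (n + i) = ∑ i ∈ range t, g i := by
  induction n with
  | zero => simp
  | succ n ih =>
    rw [← ih]
    cases t with
    | zero => simp
    | succ t =>
      rw [sum_range_succ, sum_range_succ', add_zero, ← hg n]
      simp only [add_assoc, add_comm 1]

theorem Finset.sum_range_add_add_sum_range {M : Type*} [AddCommMonoid M] (f : ℕ → M)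
    (n t L : ℕ) :
    ∑ i ∈ range L, f (n + t + i) + ∑ i ∈ range t, f (n + i) =
      ∑ i ∈ range L, f (n + i) + ∑ i ∈ range t, f (n + L + i) := by
  have h₁ := sum_range_add (fun i => f (n + i)) t L
  have h₂ := sum_range_add (fun i => f (n + i)) L t
  simp only [← add_assoc] at h₁ h₂
  rw [add_comm, ← h₁, ← h₂, add_comm t L]

theorem Finset.sum_sub_sup_range_lt {f : ℕ → ℕ} {n t L : ℕ}
    (hsup : ((range L).sup fun i => f (n + t + i)) = (range L).sup fun i => f (n + i))
    (hlt : ∑ i ∈ range t, f (n + i) < ∑ i ∈ range t, f (n + L + i)) :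
    ∑ i ∈ range L, f (n + i) - (range L).sup (fun i => f (n + i)) <
      ∑ i ∈ range L, f (n + t + i) - (range L).sup (fun i => f (n + t + i)) := by
  have hwin := sum_range_add_add_sum_range f n t L
  have hle : ((range L).sup fun i => f (n + i)) ≤ ∑ i ∈ range L, f (n + i) :=
    Finset.sup_le fun i hi => single_le_sum (f := fun i => f (n + i)) (fun _ _ => Nat.zero_le _) hi
  omega

theorem padicValNat_prod_div_lcm {ι : Type*} {p : ℕ} [Fact p.Prime] {s : Finset ι} {g : ι → ℕ}
    (hg : ∀ i ∈ s, g i ≠ 0) :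
    padicValNat p ((∏ i ∈ s, g i) / s.lcm g) =
      ∑ i ∈ s, padicValNat p (g i) - s.sup fun i => padicValNat p (g i) := by
  rw [padicValNat.div_of_dvd (lcm_dvd fun i hi => dvd_prod_of_mem g hi)]
  simp only [← Nat.factorization_def _ Fact.out, Nat.factorization_prod hg, factorization_lcm hg,
    Finsupp.finsetSum_apply]

theorem min_padicValNat_eq_of_modEq {p x y s : ℕ} [Fact p.Prime] (hx : x ≠ 0) (hy : y ≠ 0)
    (h : x ≡ y [MOD p ^ s]) : min (padicValNat p x) s = min (padicValNat p y) s := by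
  have key : ∀ {x y}, y ≠ 0 → x ≡ y [MOD p ^ s] → min (padicValNat p x) s ≤ padicValNat p y :=
    fun hy h => (padicValNat_dvd_iff_le hy).1 <| (h.dvd_iff (pow_dvd_pow p (min_le_right _ _))).1 <|
      (pow_dvd_pow p (min_le_left _ _)).trans pow_padicValNat_dvd
  exact le_antisymm (le_min (key hy h) (min_le_right _ _))
    (le_min (key hx h.symm) (min_le_right _ _))

namespace Nat

theorem exists_add_modEq_of_not_dvd {q t K : ℕ} (ht : 0 < t) (htq : t < q) (hK : ¬ q ∣ K) :
    ∃ d j, t ≤ d ∧ d < q ∧ j < t ∧ K + j ≡ d [MOD q] := by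
  obtain ⟨Q, r, hr, hrq, rfl⟩ : ∃ Q r, 0 < r ∧ r < q ∧ K = q * Q + r :=
    ⟨K / q, K % q, pos_of_ne_zero (mt dvd_of_mod_eq_zero hK), mod_lt _ (by omega),
      (div_add_mod K q).symm⟩
  refine ⟨min (r + t - 1) (q - 1), min (r + t - 1) (q - 1) - r, by omega, by omega, by omega, ?_⟩
  show (_ + _) % q = _ % q
  rw [show q * Q + r + (min (r + t - 1) (q - 1) - r) = min (r + t - 1) (q - 1) + q * Q by omega,
    add_mul_mod_self_left]

theorem exists_le_dvd_add_mul {a b N : ℕ} (hN : a.Coprime N) (hN0 : N ≠ 0) (L : ℕ) :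
    ∃ m, L ≤ m ∧ N ∣ b + m * a := by
  obtain ⟨m, -, hm⟩ := exists_mul_mod_eq_of_coprime ((N - 1) * b) hN hN0
  refine ⟨m + N * L, le_add_left_of_le (Nat.le_mul_of_pos_left L (pos_of_ne_zero hN0)), ?_⟩
  have hb : b + m * a ≡ N * b [MOD N] := by
    rw [show N * b = b + (N - 1) * b by cases N <;> simp at hN0 ⊢; ring, mul_comm m]
    exact ModEq.add_left b hm
  rw [add_mul, ← add_assoc, mul_assoc]
  exact dvd_add (modEq_zero_iff_dvd.1 (hb.trans (modEq_zero_iff_dvd.2 (dvd_mul_right N b))))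
    (dvd_mul_right _ _)

theorem eq_of_dvd_add_mul_of_lt {a b N m i j : ℕ} (hN : a.Coprime N) (hi : N ∣ b + (m + i) * a)
    (hj : N ∣ b + (m + j) * a) (hiN : i < N) (hjN : j < N) : i = j := by
  have h : b + (m + i) * a ≡ b + (m + j) * a [MOD N] :=
    (modEq_zero_iff_dvd.2 hi).trans (modEq_zero_iff_dvd.2 hj).symm
  exact (((h.add_left_cancel' b).cancel_right_of_coprime hN.symm).add_left_cancel' m).eq_of_lt_of_lt
    hiN hjN

end Nat

section ArithmeticProgression

variable {p a b : ℕ} [Fact p.Prime]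

theorem padicValNat_add_mul_lt_of_ne {s m d i : ℕ} (hpa : ¬ p ∣ a) (hd : p ^ s ∣ b + (m + d) * a)
    (hds : d < p ^ s) (his : i < p ^ s) (hid : i ≠ d) : padicValNat p (b + (m + i) * a) < s := by
  by_contra! hsi
  have hne : b + (m + i) * a ≠ 0 := by
    intro h0
    simp only [h0, padicValNat_zero_right, nonpos_iff_eq_zero] at hsi
    subst hsi
    rw [pow_zero] at hds his
    omega
  have hcop : a.Coprime (p ^ s) :=
    (Nat.coprime_comm.1 ((Fact.out : p.Prime).coprime_iff_not_dvd.2 hpa)).pow_right s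
  exact hid (Nat.eq_of_dvd_add_mul_of_lt hcop ((padicValNat_dvd_iff_le hne).2 hsi) hd his hds)

theorem sup_range_padicValNat_add_mul_eq {J m m₀ L : ℕ} (hpa : ¬ p ∣ a)
    (hJ : p ^ J ∣ b + m₀ * a) (h0 : b + m₀ * a ≠ 0) (hm : m ≤ m₀) (hm₀ : m₀ ≤ m + L)
    (hL : L < p ^ J) :
    ((range (L + 1)).sup fun i => padicValNat p (b + (m + i) * a)) = padicValNat p (b + m₀ * a) := by
  obtain ⟨d, rfl⟩ := Nat.exists_eq_add_of_le hm
  refine le_antisymm (Finset.sup_le fun i hi => ?_)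
    (le_sup (f := fun i => padicValNat p (b + (m + i) * a)) (mem_range.2 (by omega)))
  rcases eq_or_ne i d with rfl | hid
  · rfl
  · have hJd := (padicValNat_dvd_iff_le h0).1 hJ
    have := padicValNat_add_mul_lt_of_ne hpa hJ (by omega) (by simp at hi; omega) hid
    omega

theorem sum_range_min_padicValNat_add_mul {s m : ℕ} (h0 : b + m * a ≠ 0) (c : ℕ) :
    ∑ i ∈ range (p ^ s), min (padicValNat p (b + (m + c + i) * a)) s =
      ∑ i ∈ range (p ^ s), min (padicValNat p (b + (m + i) * a)) s := by
  have hne : ∀ i, b + (m + i) * a ≠ 0 := fun i h => h0 (by simp_all)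
  have hg : Function.Periodic (fun i => min (padicValNat p (b + (m + i) * a)) s) (p ^ s) :=
    fun i => min_padicValNat_eq_of_modEq (hne _) (hne _) <| by
      rw [← add_assoc]
      exact (Nat.add_modEq_right.mul_right a).add_left b
  simpa only [add_assoc] using hg.sum_range_add c

theorem sum_range_padicValNat_add_mul_lt {s m c d j : ℕ} (hpa : ¬ p ∣ a) (h0 : b + m * a ≠ 0)
    (hd : p ^ (s + 1) ∣ b + (m + d) * a) (hsd : p ^ s ≤ d) (hds : d < p ^ (s + 1))
    (hj : j < p ^ s) (hjd : c + j ≡ d [MOD p ^ (s + 1)]) :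
    ∑ i ∈ range (p ^ s), padicValNat p (b + (m + i) * a) <
      ∑ i ∈ range (p ^ s), padicValNat p (b + (m + c + i) * a) := by
  have hleft : ∀ i < p ^ s, padicValNat p (b + (m + i) * a) ≤ s := fun i hi =>
    Nat.le_of_lt_succ <| padicValNat_add_mul_lt_of_ne hpa hd hds
      (hi.trans (Nat.pow_lt_pow_right (Fact.out : p.Prime).one_lt s.lt_succ_self)) (by omega)
  have hright : s < padicValNat p (b + (m + c + j) * a) := by
    have hdvd := ((((hjd.add_left m).mul_right a).add_left b).dvd_iff dvd_rfl).2 hd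
    rw [add_assoc m]
    exact (padicValNat_dvd_iff_le fun h => h0 (by simp_all)).1 hdvd
  calc ∑ i ∈ range (p ^ s), padicValNat p (b + (m + i) * a)
      = ∑ i ∈ range (p ^ s), min (padicValNat p (b + (m + i) * a)) s :=
        sum_congr rfl fun i hi => (min_eq_left (hleft i (mem_range.1 hi))).symm
    _ = ∑ i ∈ range (p ^ s), min (padicValNat p (b + (m + c + i) * a)) s :=
        (sum_range_min_padicValNat_add_mul h0 c).symm
    _ < ∑ i ∈ range (p ^ s), padicValNat p (b + (m + c + i) * a) :=
        sum_lt_sum (fun _ _ => min_le_left _ _) ⟨j, mem_range.2 hj, min_lt_iff.2 (Or.inr hright)⟩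

end ArithmeticProgression

theorem stmt13_general (k a b : ℕ)
    (p : ℕ) (hp : p.Prime) (hpk : p ≤ k) (hpa : ¬ p ∣ a)
    (hv : padicValNat p (k + 1) < Nat.log p k) :
    ∃ n₀ : ℕ, 1 ≤ n₀ ∧
      padicValNat p ((∏ i ∈ Finset.range (k+1), (b + (n₀ + p ^ (Nat.log p k - 1) + i) * a)) /
          (Finset.range (k+1)).lcm (fun i => b + (n₀ + p ^ (Nat.log p k - 1) + i) * a)) ≠
      padicValNat p ((∏ i ∈ Finset.range (k+1), (b + (n₀ + i) * a)) /
          (Finset.range (k+1)).lcm (fun i => b + (n₀ + i) * a)) := by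
  have := Fact.mk hp
  obtain ⟨s, hs⟩ : ∃ s, Nat.log p k = s + 1 :=
    ⟨_, (Nat.succ_pred_eq_of_pos (Nat.log_pos hp.one_lt hpk)).symm⟩
  have hsk : s + 1 ≤ k := hs ▸ Nat.log_le_self p k
  have hqk : p ^ (s + 1) ≤ k := by
    rw [← hs]
    exact Nat.pow_log_le_self p (by have := hp.two_le; omega)
  have hq : ¬ p ^ (s + 1) ∣ k + 1 := fun h => by
    have := (padicValNat_dvd_iff_le (by omega : k + 1 ≠ 0)).1 h
    omega
  obtain ⟨d, j, hsd, hds, hj, hjd⟩ := Nat.exists_add_modEq_of_not_dvd (pow_pos hp.pos s)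
    (Nat.pow_lt_pow_right hp.one_lt (Nat.lt_add_one s)) hq
  have hcop : a.Coprime (p ^ k) := (Nat.coprime_comm.1 (hp.coprime_iff_not_dvd.2 hpa)).pow_right k
  obtain ⟨m, hdm, hm⟩ := Nat.exists_le_dvd_add_mul (b := b) hcop (pow_ne_zero _ hp.ne_zero) (d + 1)
  obtain ⟨n, rfl⟩ : ∃ n, m = n + d := ⟨m - d, by omega⟩
  have ha : a ≠ 0 := by rintro rfl; exact hpa (dvd_zero p)
  have h0 : ∀ m, 1 ≤ m → b + m * a ≠ 0 := fun m hm =>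
    (Nat.add_pos_right b (Nat.mul_pos hm (Nat.pos_of_ne_zero ha))).ne'
  have hsup := (sup_range_padicValNat_add_mul_eq (m := n + p ^ s) (L := k) hpa hm (h0 _ (by omega))
    (by omega) (by omega) (Nat.lt_pow_self hp.one_lt)).trans
    (sup_range_padicValNat_add_mul_eq (m := n) (L := k) hpa hm (h0 _ (by omega)) (by omega) (by omega)
      (Nat.lt_pow_self hp.one_lt)).symm
  have hlt := sum_range_padicValNat_add_mul_lt (m := n) (c := k + 1) hpa (h0 n (by omega))
    ((pow_dvd_pow p hsk).trans hm) hsd hds hj hjd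
  refine ⟨n, by omega, ?_⟩
  rw [hs, Nat.add_sub_cancel, padicValNat_prod_div_lcm fun i _ => h0 _ (by omega),
    padicValNat_prod_div_lcm fun i _ => h0 _ (by omega)]
  exact (sum_sub_sup_range_lt (f := fun i => padicValNat p (b + i * a)) hsup hlt).ne'

theorem stmt13 (k a b : ℕ) (hk : 2 ≤ k) (ha : 1 ≤ a) (hab : Nat.gcd a b = 1)
    (p : ℕ) (hp : p.Prime) (hpk : p ≤ k) (hpa : ¬ p ∣ a)
    (hv : padicValNat p (k + 1) < Nat.log p k) :
    ∃ n₀ : ℕ, 1 ≤ n₀ ∧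
      padicValNat p ((∏ i ∈ Finset.range (k+1), (b + (n₀ + p ^ (Nat.log p k - 1) + i) * a)) /
          (Finset.range (k+1)).lcm (fun i => b + (n₀ + p ^ (Nat.log p k - 1) + i) * a)) ≠
      padicValNat p ((∏ i ∈ Finset.range (k+1), (b + (n₀ + i) * a)) /
          (Finset.range (k+1)).lcm (fun i => b + (n₀ + i) * a)) :=
  stmt13_general k a b p hp hpk hpa hv
end

section
/- Let k ≥ 2 be an integer, a ≥ 1, b ≥ 0 integers with gcd(a,b)=1, and let p ≤ k be a prime with p ∤ a and v_p(k+1) ≥ e_{p,k}, where e_{p,k} = ⌊log_p k⌋. Then v_p(g_{k,a,b}(n+1)) = v_p(g_{k,a,b}(n)) for every positive integer n; i.e., n ↦ v_p(g_{k,a,b}(n)) is constant. -/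
/-! For a prime `p`, `v_p(∏ uᵢ / lcm uᵢ) = ∑ v_p(uᵢ) - max v_p(uᵢ)`, so passing from the window
`u_n, …, u_{n+k}` of the progression `u_m = b + m a` to the next one only replaces `u_n` by
`u_{n+k+1}`. These differ by `(k + 1) a`, so their valuations agree unless both are at least
`v_p(k + 1) ≥ log_p k`. As `p ∤ a`, two terms at distance at most `k < p ^ (log_p k + 1)` cannot
both have valuation above `log_p k`; so in that second case no intermediate term has valuation
above `log_p k`, and both maxima are attained at the endpoints. -/

open Finset

theorem Nat.factorization_finset_lcm {ι : Type*} {s : Finset ι} {f : ι → ℕ}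
    (hf : ∀ i ∈ s, f i ≠ 0) (p : ℕ) :
    (s.lcm f).factorization p = s.sup fun i => (f i).factorization p := by
  classical
  induction s using Finset.induction_on with
  | empty => simp
  | insert c s hc ih =>
    have hs : ∀ i ∈ s, f i ≠ 0 := fun i hi => hf i (mem_insert_of_mem hi)
    rw [lcm_insert, lcm_eq_nat_lcm, sup_insert, ← ih hs,
      Nat.factorization_lcm (hf c (mem_insert_self c s)) (lcm_ne_zero_iff.2 hs),
      Finsupp.sup_apply]

theorem Nat.factorization_prod_div_lcm {ι : Type*} {s : Finset ι} {f : ι → ℕ}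
    (hf : ∀ i ∈ s, f i ≠ 0) (p : ℕ) :
    ((∏ i ∈ s, f i) / s.lcm f).factorization p =
      (∑ i ∈ s, (f i).factorization p) - s.sup fun i => (f i).factorization p := by
  rw [Nat.factorization_div (Finset.lcm_dvd fun i hi => dvd_prod_of_mem f hi), Finsupp.tsub_apply,
    Nat.factorization_prod hf, Finset.sum_apply', Nat.factorization_finset_lcm hf]

theorem sum_sub_sup_range_shift (v : ℕ → ℕ) (n k : ℕ)
    (h : v n = v (n + 1 + k) ∨ ∀ i < k, v (n + 1 + i) ≤ v n ∧ v (n + 1 + i) ≤ v (n + 1 + k)) :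
    (∑ i ∈ range (k + 1), v (n + 1 + i)) - (range (k + 1)).sup (fun i => v (n + 1 + i)) =
      (∑ i ∈ range (k + 1), v (n + i)) - (range (k + 1)).sup (fun i => v (n + i)) := by
  set S := ∑ i ∈ range k, v (n + 1 + i)
  set I := (range k).sup fun i => v (n + 1 + i)
  have hshift : ∀ i, v (n + (i + 1)) = v (n + 1 + i) := fun i => by rw [add_comm i, add_assoc]
  have hsum : ∑ i ∈ range (k + 1), v (n + i) = S + v n := by
    simp only [sum_range_succ', add_zero, hshift, S]
  have hsup : (range (k + 1)).sup (fun i => v (n + i)) = v n ⊔ I := by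
    rw [range_add_one', sup_insert, sup_map, add_zero]
    exact congrArg (v n ⊔ ·) (sup_congr rfl fun i _ => hshift i)
  rw [hsum, hsup, sum_range_succ, range_add_one, sup_insert]
  rcases h with h | h
  · rw [h]
  · have hI : I ≤ v n ∧ I ≤ v (n + 1 + k) :=
      ⟨Finset.sup_le fun i hi => (h i (mem_range.1 hi)).1,
        Finset.sup_le fun i hi => (h i (mem_range.1 hi)).2⟩
    rw [sup_eq_left.2 hI.1, sup_eq_left.2 hI.2]
    omega

theorem Nat.Coprime.dvd_of_dvd_add_mul {q a b m d : ℕ} (hqa : q.Coprime a)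
    (h₁ : q ∣ b + m * a) (h₂ : q ∣ b + (m + d) * a) : q ∣ d := by
  rw [add_mul, ← add_assoc] at h₂
  exact hqa.dvd_of_dvd_mul_right ((Nat.dvd_add_right h₁).1 h₂)

-- Otherwise `p ^ (log p k + 1) > k` would divide `d`.
theorem factorization_add_mul_le_log_or {p a b m d k : ℕ} (hp : p.Prime) (hpa : ¬p ∣ a)
    (hd : 0 < d) (hdk : d ≤ k) (hm : b + m * a ≠ 0) (hmd : b + (m + d) * a ≠ 0) :
    (b + m * a).factorization p ≤ Nat.log p k ∨
      (b + (m + d) * a).factorization p ≤ Nat.log p k := by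
  by_contra! h
  have hdvd : p ^ (Nat.log p k + 1) ∣ d :=
    ((hp.coprime_iff_not_dvd.2 hpa).pow_left _).dvd_of_dvd_add_mul
      ((hp.pow_dvd_iff_le_factorization hm).2 h.1) ((hp.pow_dvd_iff_le_factorization hmd).2 h.2)
  have : k < p ^ (Nat.log p k + 1) := Nat.lt_pow_succ_log_self hp.one_lt k
  have := Nat.le_of_dvd hd hdvd
  omega

theorem factorization_add_eq_or_le {p x c t : ℕ} (hp : p.Prime) (hx : x ≠ 0) (hc : p ^ t ∣ c) :
    (x + c).factorization p = x.factorization p ∨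
      t ≤ x.factorization p ∧ t ≤ (x + c).factorization p := by
  have hxc : x + c ≠ 0 := by omega
  have hiff : ∀ j ≤ t, p ^ j ∣ x ↔ p ^ j ∣ x + c := fun j hj =>
    (Nat.dvd_add_left ((pow_dvd_pow p hj).trans hc)).symm
  by_cases ht : t ≤ x.factorization p
  · refine .inr ⟨ht, (hp.pow_dvd_iff_le_factorization hxc).1 ((hiff t le_rfl).1 ?_)⟩
    exact (hp.pow_dvd_iff_le_factorization hx).2 ht
  · refine .inl (le_antisymm ?_ ?_)
    · by_contra! hlt
      exact Nat.pow_succ_factorization_not_dvd hx hp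
        ((hiff _ (by omega)).2 ((hp.pow_dvd_iff_le_factorization hxc).2 hlt))
    · exact (hp.pow_dvd_iff_le_factorization hxc).1 ((hiff _ (by omega)).1 (Nat.ordProj_dvd x p))

theorem factorization_window_ends_eq_or_dominate {p a b n k : ℕ} (hp : p.Prime) (hpa : ¬p ∣ a)
    (hv : Nat.log p k ≤ padicValNat p (k + 1)) (hn : b + n * a ≠ 0) :
    (b + n * a).factorization p = (b + (n + 1 + k) * a).factorization p ∨
      ∀ i < k, (b + (n + 1 + i) * a).factorization p ≤ (b + n * a).factorization p ∧
        (b + (n + 1 + i) * a).factorization p ≤ (b + (n + 1 + k) * a).factorization p := by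
  have hne : ∀ m, n ≤ m → b + m * a ≠ 0 := fun m hm => by
    have := Nat.mul_le_mul_right a hm
    omega
  have hends := factorization_add_eq_or_le hp hn
    (dvd_mul_of_dvd_left (pow_padicValNat_dvd (n := k + 1)) a)
  rw [show b + n * a + (k + 1) * a = b + (n + 1 + k) * a by ring] at hends
  rcases hends with heq | ⟨h₀, h₁⟩
  · exact .inl heq.symm
  by_cases heq : (b + n * a).factorization p = (b + (n + 1 + k) * a).factorization p
  · exact .inl heq
  refine .inr fun i hi => ?_
  suffices (b + (n + 1 + i) * a).factorization p ≤ Nat.log p k by omega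
  have hleft := factorization_add_mul_le_log_or hp hpa (k := k) (m := n) (d := 1 + i) (by omega)
    (by omega) hn (hne (n + (1 + i)) (by omega))
  have hright := factorization_add_mul_le_log_or hp hpa (k := k) (m := n + 1 + i) (d := k - i)
    (by omega) (by omega) (hne (n + 1 + i) (by omega)) (hne (n + 1 + i + (k - i)) (by omega))
  rw [← add_assoc] at hleft
  rw [show n + 1 + i + (k - i) = n + 1 + k by omega] at hright
  omega

theorem stmt14_general (k a b : ℕ) (ha : 1 ≤ a)
    (p : ℕ) (hp : p.Prime) (hpa : ¬ p ∣ a)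
    (hv : Nat.log p k ≤ padicValNat p (k + 1)) (n : ℕ) (hn : 1 ≤ n) :
    padicValNat p ((∏ i ∈ Finset.range (k+1), (b + (n + 1 + i) * a)) /
        (Finset.range (k+1)).lcm (fun i => b + (n + 1 + i) * a)) =
    padicValNat p ((∏ i ∈ Finset.range (k+1), (b + (n + i) * a)) /
        (Finset.range (k+1)).lcm (fun i => b + (n + i) * a)) := by
  have hne : ∀ m, 1 ≤ m → b + m * a ≠ 0 := fun m hm => by
    have := Nat.mul_le_mul hm ha
    omega
  have hval : ∀ N, 1 ≤ N → padicValNat p ((∏ i ∈ range (k + 1), (b + (N + i) * a)) /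
      (range (k + 1)).lcm (fun i => b + (N + i) * a)) =
      (∑ i ∈ range (k + 1), (b + (N + i) * a).factorization p) -
        (range (k + 1)).sup fun i => (b + (N + i) * a).factorization p := fun N hN => by
    rw [← Nat.factorization_def _ hp, Nat.factorization_prod_div_lcm fun i _ => hne _ (by omega)]
  rw [hval (n + 1) (by omega), hval n hn]
  exact sum_sub_sup_range_shift (fun m => (b + m * a).factorization p) n k
    (factorization_window_ends_eq_or_dominate hp hpa hv (hne n hn))

theorem stmt14 (k a b : ℕ) (hk : 2 ≤ k) (ha : 1 ≤ a) (hab : Nat.gcd a b = 1)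
    (p : ℕ) (hp : p.Prime) (hpk : p ≤ k) (hpa : ¬ p ∣ a)
    (hv : Nat.log p k ≤ padicValNat p (k + 1)) (n : ℕ) (hn : 1 ≤ n) :
    padicValNat p ((∏ i ∈ Finset.range (k+1), (b + (n + 1 + i) * a)) /
        (Finset.range (k+1)).lcm (fun i => b + (n + 1 + i) * a)) =
    padicValNat p ((∏ i ∈ Finset.range (k+1), (b + (n + i) * a)) /
        (Finset.range (k+1)).lcm (fun i => b + (n + i) * a)) :=
  stmt14_general k a b ha p hp hpa hv n hn
end

section
/- Let k ≥ 0, a ≥ 1, b ≥ 0 be integers with d = gcd(a,b), a = d·a', b = d·b'. Then for every positive integer n, g_{k,a,b}(n) = d^k · g_{k,a',b'}(n), where g_{k,a,b}(n) = (∏_{i=0}^{k}(b+(n+i)a)) / lcm(b+na, ..., b+(n+k)a). -/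
/-!
Writing `a = d a'` and `b = d b'`, every term `b + (n + i) a` is `d` times the corresponding term
`b' + (n + i) a'`. Scaling all `k + 1` terms by `d` multiplies their product by `d ^ (k + 1)` and
their lcm by `d`, so the quotient gains the factor `d ^ k`; the division stays exact because the
lcm divides the product.
-/

theorem Finset.lcm_mul_left_of_nonempty {ι α : Type*} [CommMonoidWithZero α]
    [StrongNormalizedGCDMonoid α] {s : Finset ι} (hs : s.Nonempty) (f : ι → α) (a : α) :
    (s.lcm fun i ↦ a * f i) = normalize a * s.lcm f := by
  classical
  induction hs using Finset.Nonempty.cons_induction with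
  | singleton i => simp [Finset.lcm_singleton]
  | cons i t _ _ ih =>
    rw [Finset.cons_eq_insert, Finset.lcm_insert, Finset.lcm_insert, ih, ← lcm_mul_left]
    exact lcm_eq_of_associated_right ((normalize_associated a).mul_right _) _

theorem Nat.prod_div_lcm_mul_left {ι : Type*} (s : Finset ι) (f : ι → ℕ) {d : ℕ} (hd : 0 < d) :
    (∏ i ∈ s, d * f i) / s.lcm (fun i ↦ d * f i) = d ^ (s.card - 1) * ((∏ i ∈ s, f i) / s.lcm f) := by
  rcases s.eq_empty_or_nonempty with rfl | hs
  · simp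
  have hprod : ∏ i ∈ s, d * f i = d ^ (s.card - 1) * d * ∏ i ∈ s, f i := by
    rw [Finset.prod_mul_distrib, Finset.prod_const, ← pow_succ, Nat.sub_add_cancel hs.card_pos]
  rw [hprod, Finset.lcm_mul_left_of_nonempty hs, normalize_eq, mul_comm (d ^ _) d, mul_assoc,
    Nat.mul_div_mul_left _ _ hd, Nat.mul_div_assoc _ (Finset.lcm_dvd_prod s f)]

theorem stmt16_general (k a b : ℕ) (ha : 1 ≤ a) (d a' b' : ℕ)
    (ha' : a = d * a') (hb' : b = d * b') (n : ℕ) :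
    (∏ i ∈ Finset.range (k+1), (b + (n + i) * a)) /
        (Finset.range (k+1)).lcm (fun i => b + (n + i) * a) =
      d ^ k * ((∏ i ∈ Finset.range (k+1), (b' + (n + i) * a')) /
        (Finset.range (k+1)).lcm (fun i => b' + (n + i) * a')) := by
  have hd : 0 < d := Nat.pos_of_ne_zero (by rintro rfl; omega)
  have hterms : (fun i ↦ b + (n + i) * a) = fun i ↦ d * (b' + (n + i) * a') := by
    funext i
    rw [ha', hb']
    ring
  rw [hterms, Nat.prod_div_lcm_mul_left _ _ hd, Finset.card_range, Nat.add_sub_cancel]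

theorem stmt16 (k a b : ℕ) (ha : 1 ≤ a) (d a' b' : ℕ) (hd : d = Nat.gcd a b)
    (ha' : a = d * a') (hb' : b = d * b') (n : ℕ) (hn : 1 ≤ n) :
    (∏ i ∈ Finset.range (k+1), (b + (n + i) * a)) /
        (Finset.range (k+1)).lcm (fun i => b + (n + i) * a) =
      d ^ k * ((∏ i ∈ Finset.range (k+1), (b' + (n + i) * a')) /
        (Finset.range (k+1)).lcm (fun i => b' + (n + i) * a')) :=
  stmt16_general k a b ha d a' b' ha' hb' n
end

section
/- Let k ≥ 2, a ≥ 1, b ≥ 0 be integers with gcd(a,b)=1, and suppose P is the smallest period of the periodic function g_{k,a,b}: ℕ → ℕ given by g_{k,a,b}(n) = (∏_{i=0}^{k}(b+(n+i)a)) / lcm(b+na, ..., b+(n+k)a). Then P = L_k / (δ_{k,a} · ∏_{q prime, q ∣ gcd(a, L_k)} q^{⌊log_q k⌋}), where L_k = lcm(1,2,...,k) and δ_{k,a} = p^{⌊log_p k⌋} if there exists a prime p ≤ k with p ∤ a and v_p(k+1) ≥ ⌊log_p k⌋, and δ_{k,a} = 1 otherwise. -/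
/-!
For `p ∤ a` and `n ≥ 1`, `v_p(g(n)) = ∑_{e=1}^{⌊log_p k⌋} (c_e(n) - 1)`, where `c_e(n)` counts the
terms among `b + n a, …, b + (n + k) a` divisible by `p ^ e`: a term of maximal valuation is
the only one divisible by `p ^ e` once `p ^ e > k`. For `p ∣ a` the valuation vanishes since
`gcd(a, b) = 1`. As `a` is invertible mod `p ^ e`, every window of `p ^ e` consecutive terms
contains exactly one multiple of `p ^ e`, so `c_e` has period `p ^ e` and is constant when
`p ^ e ∣ k + 1`; hence `∏ p ^ ⌊log_p k⌋` over the primes `p ≤ k`, `p ∤ a`,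
`p ^ ⌊log_p k⌋ ∤ k + 1` is a period.

Conversely, let `T` be a period, `L = ⌊log_p k⌋` for such a prime, and suppose `p ^ L ∤ T`.
Then `∑_e (c_e - 1)` also has period `gcd(T, p ^ L) ∣ p ^ (L - 1)`, hence so does `c_L`.
The number of multiples of `p ^ L` in a window of length `p ^ (L - 1)` is therefore
`(k + 1)`-periodic as well as `p ^ L`-periodic, hence `p ^ (L - 1)`-periodic. A window of
length `p ^ L` then contains `p` times that number of multiples of `p ^ L`, but it contains
exactly one.

Finally `lcm(1, …, k) = ∏_{p ≤ k} p ^ ⌊log_p k⌋`, and at most one prime `p ≤ k` satisfies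
`p ^ ⌊log_p k⌋ ∣ k + 1`: for two of them `p ^ ⌊log_p k⌋ q ^ ⌊log_q k⌋ ≤ k + 1 ≤ p ^ ⌊log_p k⌋ p`,
so `q ≤ p`, and symmetrically `p ≤ q`.
-/

open Finset Function Nat

namespace Function.Periodic

variable {α : Type*} {f : ℕ → α} {m n : ℕ}

theorem of_dvd (h : Periodic f m) (hmn : m ∣ n) : Periodic f n := by
  obtain ⟨c, rfl⟩ := hmn
  simpa [mul_comm] using h.nat_mul c

theorem nat_gcd (hm : Periodic f m) (hn : Periodic f n) : Periodic f (m.gcd n) := by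
  induction m, n using Nat.gcd.induction with
  | H0 n => simpa using hn
  | H1 m n _ ih =>
    have hmod : Periodic f (n % m) := fun x =>
      calc f (x + n % m) = f (x + n % m + n / m * m) := (hm.nat_mul _ _).symm
        _ = f (x + n) := by rw [add_assoc, Nat.mod_add_div']
        _ = f x := hn x
    rw [Nat.gcd_rec]
    exact ih hmod hm

theorem of_forall_ge {N : ℕ} (hm : Periodic f m) (hm0 : 0 < m)
    (h : ∀ x, N ≤ x → f (x + n) = f x) : Periodic f n := fun x =>
  calc f (x + n) = f (x + n + N * m) := (hm.nat_mul N _).symm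
    _ = f (x + N * m + n) := by rw [add_right_comm]
    _ = f (x + N * m) := h _ (le_add_left (Nat.le_mul_of_pos_right N hm0))
    _ = f x := hm.nat_mul N x

theorem prime_pow_of_not_dvd {p L : ℕ} (hp : p.Prime) (hpow : Periodic f (p ^ (L + 1)))
    (hm : Periodic f m) (hdvd : ¬ p ^ (L + 1) ∣ m) : Periodic f (p ^ L) := by
  apply (hm.nat_gcd hpow).of_dvd
  obtain ⟨j, hj, hgj⟩ := (Nat.dvd_prime_pow hp).1 (Nat.gcd_dvd_right m (p ^ (L + 1)))
  have hjL : j ≠ L + 1 := by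
    rintro rfl
    exact hdvd (hgj ▸ Nat.gcd_dvd_left m _)
  rw [hgj]
  exact pow_dvd_pow p (by omega)

end Function.Periodic

section WindowCount

variable (P : ℕ → Prop) [DecidablePred P]

def windowCount (n len : ℕ) : ℕ := Nat.count (fun i => P (n + i)) len

variable {P}

theorem windowCount_eq_card (n len : ℕ) : windowCount P n len = #{i ∈ range len | P (n + i)} :=
  Nat.count_eq_card_filter_range _ _

theorem windowCount_add (n l m : ℕ) :
    windowCount P n (l + m) = windowCount P n l + windowCount P (n + l) m := by
  simp only [windowCount, Nat.count_add, add_assoc]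

theorem windowCount_mono (n : ℕ) {l m : ℕ} (h : l ≤ m) : windowCount P n l ≤ windowCount P n m :=
  Nat.count_monotone _ h

theorem periodic_windowCount {d : ℕ} (h : Periodic P d) (len : ℕ) :
    Periodic (windowCount P · len) d := fun n => by
  have h' : ∀ x, P (x + d) = P x := h
  simp only [windowCount, add_right_comm n d, h']

theorem periodic_windowCount_one {len : ℕ} (h : Periodic P len) :
    Periodic (windowCount P · len) 1 := fun n => by
  have h1 := windowCount_add (P := P) n 1 len
  have h2 := windowCount_add (P := P) n len 1
  have h3 := periodic_windowCount h 1 n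
  rw [add_comm 1 len] at h1
  simp only at h3 ⊢
  omega

theorem periodic_windowCount_swap {l m : ℕ} (h : Periodic (windowCount P · l) m) :
    Periodic (windowCount P · m) l := fun n => by
  have h1 := windowCount_add (P := P) n m l
  have h2 := windowCount_add (P := P) n l m
  have h3 := h n
  rw [add_comm m l] at h1
  simp only at h3 ⊢
  omega

theorem windowCount_nat_mul {l : ℕ} (h : Periodic (windowCount P · l) l) (j n : ℕ) :
    windowCount P n (j * l) = j * windowCount P n l := by
  induction j with
  | zero => simp [windowCount]
  | succ j ih =>
    have hj : windowCount P (n + j * l) l = windowCount P n l := h.nat_mul j n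
    rw [succ_mul, windowCount_add, ih, hj, succ_mul]

end WindowCount

section Progression

variable {a b d : ℕ}

theorem periodic_dvd_add_mul : Periodic (d ∣ b + · * a) d := fun x => by
  simp only [add_mul, ← add_assoc]
  exact propext (Nat.dvd_add_left (dvd_mul_right d a))

theorem exists_zmod_forall_dvd_add_mul_iff (had : Coprime a d) (b : ℕ) :
    ∃ r : ZMod d, ∀ x : ℕ, d ∣ b + x * a ↔ (x : ZMod d) = r := by
  have hinv : (a : ZMod d) * (a : ZMod d)⁻¹ = 1 := ZMod.coe_mul_inv_eq_one a had
  refine ⟨-b * (a : ZMod d)⁻¹, fun x => ?_⟩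
  rw [← ZMod.natCast_eq_zero_iff]
  push_cast
  constructor
  · intro h
    linear_combination (a : ZMod d)⁻¹ * h - (x : ZMod d) * hinv
  · intro h
    linear_combination (a : ZMod d) * h - (b : ZMod d) * hinv

theorem windowCount_dvd_add_mul_self (hd : d ≠ 0) (had : Coprime a d) (n : ℕ) :
    windowCount (d ∣ b + · * a) n d = 1 := by
  have : NeZero d := ⟨hd⟩
  obtain ⟨r, hr⟩ := exists_zmod_forall_dvd_add_mul_iff had b
  have h0 :=
    (periodic_windowCount_one (periodic_dvd_add_mul (a := a) (b := b) (d := d))).nat_mul_eq n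
  simp only [Nat.cast_id, mul_one] at h0
  rw [h0, windowCount_eq_card, card_eq_one]
  refine ⟨r.val, ?_⟩
  ext x
  simp only [mem_filter, mem_range, zero_add, hr, mem_singleton]
  constructor
  · rintro ⟨hx, rfl⟩
    rw [ZMod.val_natCast, Nat.mod_eq_of_lt hx]
  · rintro rfl
    exact ⟨ZMod.val_lt r, ZMod.natCast_zmod_val r⟩

theorem windowCount_dvd_add_mul_le_one (hd : d ≠ 0) (had : Coprime a d) {l : ℕ} (hl : l ≤ d)
    (n : ℕ) : windowCount (d ∣ b + · * a) n l ≤ 1 :=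
  (windowCount_mono n hl).trans (windowCount_dvd_add_mul_self hd had n).le

theorem one_le_windowCount_dvd_add_mul (hd : d ≠ 0) (had : Coprime a d) {l : ℕ} (hl : d ≤ l)
    (n : ℕ) : 1 ≤ windowCount (d ∣ b + · * a) n l :=
  (windowCount_dvd_add_mul_self hd had n).ge.trans (windowCount_mono n hl)

end Progression

theorem Finset.sum_tsub_one {ι : Type*} (s : Finset ι) (f : ι → ℕ) :
    ∑ i ∈ s, (f i - 1) = ∑ i ∈ s, f i - #{i ∈ s | f i ≠ 0} := by
  rw [card_filter, eq_tsub_iff_add_eq_of_le (sum_le_sum fun i _ => by split_ifs <;> omega),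
    ← sum_add_distrib]
  exact sum_congr rfl fun i _ => by split_ifs <;> omega

theorem Nat.Prime.pow_dvd_finset_lcm_iff {ι : Type*} {s : Finset ι} {t : ι → ℕ}
    (ht : ∀ i ∈ s, t i ≠ 0) {p e : ℕ} (hp : p.Prime) (he : e ≠ 0) :
    p ^ e ∣ s.lcm t ↔ ∃ i ∈ s, p ^ e ∣ t i := by
  rw [hp.pow_dvd_iff_le_factorization (by simpa [Finset.lcm_eq_zero_iff] using ht),
    Finset.factorization_lcm ht, Finset.le_sup_iff (Nat.pos_of_ne_zero he)]
  exact exists_congr fun i => and_congr_right fun hi =>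
    (hp.pow_dvd_iff_le_factorization (ht i hi)).symm

theorem Nat.factorization_prod_div_lcm_s18 {ι : Type*} {s : Finset ι} {t : ι → ℕ}
    (ht : ∀ i ∈ s, t i ≠ 0) {p B : ℕ} (hp : p.Prime) (hB : ∏ i ∈ s, t i < p ^ B) :
    ((∏ i ∈ s, t i) / s.lcm t).factorization p = ∑ e ∈ Ico 1 B, (#{i ∈ s | p ^ e ∣ t i} - 1) := by
  have hprod0 : ∏ i ∈ s, t i ≠ 0 := prod_ne_zero_iff.2 ht
  have hdvd : s.lcm t ∣ ∏ i ∈ s, t i := Finset.lcm_dvd_prod s t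
  have hprod : (∏ i ∈ s, t i).factorization p = ∑ e ∈ Ico 1 B, #{i ∈ s | p ^ e ∣ t i} := by
    rw [Nat.factorization_prod ht, Finsupp.finsetSum_apply]
    calc ∑ i ∈ s, (t i).factorization p = ∑ i ∈ s, #{e ∈ Ico 1 B | p ^ e ∣ t i} :=
          sum_congr rfl fun i hi => factorization_eq_card_pow_dvd_of_lt hp
            (Nat.pos_of_ne_zero (ht i hi)) ((Nat.le_of_dvd (Nat.pos_of_ne_zero hprod0)
              (dvd_prod_of_mem t hi)).trans_lt hB)
      _ = _ := sum_card_bipartiteAbove_eq_sum_card_bipartiteBelow (r := fun i e => p ^ e ∣ t i)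
  have hlcm : (s.lcm t).factorization p = #{e ∈ Ico 1 B | #{i ∈ s | p ^ e ∣ t i} ≠ 0} := by
    rw [factorization_eq_card_pow_dvd_of_lt hp (Nat.pos_of_dvd_of_pos hdvd
      (Nat.pos_of_ne_zero hprod0)) ((Nat.le_of_dvd (Nat.pos_of_ne_zero hprod0) hdvd).trans_lt hB)]
    refine congrArg card (filter_congr fun e he => ?_)
    rw [hp.pow_dvd_finset_lcm_iff ht (by simp at he; omega), ← Nat.pos_iff_ne_zero, Finset.card_pos,
      filter_nonempty_iff]
  rw [Nat.factorization_div hdvd, Finsupp.tsub_apply, hprod, hlcm, sum_tsub_one]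

-- the paper's `g_{k,a,b}(n)`
def prodDivLcm (k a b n : ℕ) : ℕ :=
  (∏ i ∈ range (k + 1), (b + (n + i) * a)) / (range (k + 1)).lcm fun i => b + (n + i) * a

def periodPrimes (k a : ℕ) : Finset ℕ := {p ∈ primesLE k | ¬ p ∣ a ∧ ¬ p ^ log p k ∣ k + 1}

-- `∏ p ^ ⌊log_p k⌋` over these primes is the paper's `δ_{k,a}`
def exceptionalPrimes (k a : ℕ) : Finset ℕ := {p ∈ primesLE k | ¬ p ∣ a ∧ p ^ log p k ∣ k + 1}

section prodDivLcm

variable {k a b : ℕ}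

theorem prodDivLcm_pos (ha : 0 < a) {n : ℕ} (hn : 0 < n) : 0 < prodDivLcm k a b n := by
  have ht : ∀ i ∈ range (k + 1), 0 < b + (n + i) * a := fun i _ => by
    have := Nat.mul_pos (Nat.add_pos_left hn i) ha
    omega
  exact Nat.div_pos (Nat.le_of_dvd (prod_pos ht) (Finset.lcm_dvd_prod _ _))
    (Nat.pos_of_ne_zero (by simpa [Finset.lcm_eq_zero_iff] using fun i hi => (ht i hi).ne'))

theorem factorization_prodDivLcm_of_dvd (hab : Coprime a b) {p : ℕ} (hp : p.Prime) (hpa : p ∣ a)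
    (n : ℕ) : (prodDivLcm k a b n).factorization p = 0 := by
  refine Nat.factorization_eq_zero_of_not_dvd fun h => ?_
  obtain ⟨i, -, hi⟩ := hp.prime.exists_mem_finset_dvd
    (h.trans (Nat.div_dvd_of_dvd (Finset.lcm_dvd_prod _ _)))
  have hpb : p ∣ b := (Nat.dvd_add_left (dvd_mul_of_dvd_right hpa _)).1 hi
  exact hp.not_dvd_one (hab.gcd_eq_one ▸ Nat.dvd_gcd hpa hpb)

theorem factorization_prodDivLcm (ha : 0 < a) {p : ℕ} (hp : p.Prime) (hpa : ¬ p ∣ a) {n : ℕ}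
    (hn : 0 < n) : (prodDivLcm k a b n).factorization p =
      ∑ e ∈ Icc 1 (log p k), (windowCount (p ^ e ∣ b + · * a) n (k + 1) - 1) := by
  have ht : ∀ i ∈ range (k + 1), b + (n + i) * a ≠ 0 := fun i _ => by
    have := Nat.mul_pos (Nat.add_pos_left hn i) ha
    omega
  set N := ∏ i ∈ range (k + 1), (b + (n + i) * a)
  have hB : N < p ^ (N + k + 1) :=
    (Nat.lt_pow_self hp.one_lt).trans_le (Nat.pow_le_pow_right hp.pos (by omega))
  rw [prodDivLcm, Nat.factorization_prod_div_lcm_s18 ht hp hB]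
  simp only [windowCount_eq_card]
  refine (sum_subset (fun e he => ?_) fun e he hne => ?_).symm
  · have := Nat.log_le_self p k
    simp only [mem_Icc, mem_Ico] at he ⊢
    omega
  · have hLe : log p k < e := by
      simp only [mem_Icc, mem_Ico] at he hne
      omega
    have hcop : Coprime a (p ^ e) := ((hp.coprime_iff_not_dvd.2 hpa).symm).pow_right e
    have := windowCount_dvd_add_mul_le_one (b := b) (pow_ne_zero e hp.ne_zero) hcop (l := k + 1)
      ((Nat.lt_pow_succ_log_self hp.one_lt k).trans_le (Nat.pow_le_pow_right hp.pos hLe)) n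
    rw [windowCount_eq_card] at this
    omega

theorem mem_periodPrimes {p : ℕ} :
    p ∈ periodPrimes k a ↔ p.Prime ∧ p ≤ k ∧ ¬ p ∣ a ∧ ¬ p ^ log p k ∣ k + 1 := by
  simp only [periodPrimes, mem_filter, mem_primesLE]
  tauto

theorem prodDivLcm_add_of_forall_dvd (ha : 0 < a) (hab : Coprime a b) {T : ℕ}
    (hT : ∀ p ∈ periodPrimes k a, p ^ log p k ∣ T) {n : ℕ} (hn : 0 < n) :
    prodDivLcm k a b (n + T) = prodDivLcm k a b n := by
  refine Nat.eq_of_factorization_eq (prodDivLcm_pos ha (by omega)).ne' (prodDivLcm_pos ha hn).ne'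
    fun p => ?_
  by_cases hp : p.Prime
  swap
  · simp [Nat.factorization_eq_zero_of_not_prime _ hp]
  by_cases hpa : p ∣ a
  · rw [factorization_prodDivLcm_of_dvd hab hp hpa, factorization_prodDivLcm_of_dvd hab hp hpa]
  rw [factorization_prodDivLcm ha hp hpa (by omega), factorization_prodDivLcm ha hp hpa hn]
  refine sum_congr rfl fun e he => congrArg (· - 1) ?_
  rw [mem_Icc] at he
  have hpe : p ^ e ∣ p ^ log p k := pow_dvd_pow p he.2
  by_cases hdvd : p ^ log p k ∣ k + 1
  · exact ((periodic_windowCount_one (periodic_dvd_add_mul.of_dvd (hpe.trans hdvd))).of_dvd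
      (one_dvd T)) n
  · have hpk : p ≤ k := (Nat.log_pos_iff.1 (by omega)).1
    exact ((periodic_windowCount periodic_dvd_add_mul _).of_dvd
      (hpe.trans (hT p (mem_periodPrimes.2 ⟨hp, hpk, hpa, hdvd⟩)))) n

theorem pow_log_dvd_of_forall_prodDivLcm_add (ha : 0 < a) {p : ℕ} (hp : p.Prime) (hpa : ¬ p ∣ a)
    (hkp : ¬ p ^ log p k ∣ k + 1) {T : ℕ}
    (hT : ∀ n, 1 ≤ n → prodDivLcm k a b (n + T) = prodDivLcm k a b n) :
    p ^ log p k ∣ T := by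
  obtain ⟨L, hL⟩ : ∃ L, log p k = L + 1 :=
    Nat.exists_eq_add_one.2 (Nat.pos_of_ne_zero fun h => hkp (by simp [h]))
  have hk : k ≠ 0 := fun h => by simp [h] at hL
  rw [hL] at hkp ⊢
  have hcop : ∀ e, Coprime a (p ^ e) := fun e => ((hp.coprime_iff_not_dvd.2 hpa).symm).pow_right e
  have hc : ∀ e, Periodic (windowCount (p ^ e ∣ b + · * a) · (k + 1)) (p ^ e) :=
    fun e => periodic_windowCount periodic_dvd_add_mul _
  set F : ℕ → ℕ := fun n => ∑ e ∈ Icc 1 (L + 1), (windowCount (p ^ e ∣ b + · * a) n (k + 1) - 1)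
  have hFpow : Periodic F (p ^ (L + 1)) := fun n =>
    sum_congr rfl fun e he => congrArg (· - 1) (((hc e).of_dvd (pow_dvd_pow p (mem_Icc.1 he).2)) n)
  have hFT : Periodic F T := hFpow.of_forall_ge (N := 1) (pow_pos hp.pos _) fun n hn => by
    simp only [F]
    rw [← hL, ← factorization_prodDivLcm ha hp hpa (n := n + T) (by omega),
      ← factorization_prodDivLcm ha hp hpa hn, hT n hn]
  by_contra hTdvd
  -- `F` now has period `p ^ L`, which every summand but the top one also has
  have hcL : Periodic (windowCount (p ^ (L + 1) ∣ b + · * a) · (k + 1)) (p ^ L) := fun n => by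
    have hF := hFpow.prime_pow_of_not_dvd hp hFT hTdvd n
    have hlow : ∀ e ∈ Icc 1 L, windowCount (p ^ e ∣ b + · * a) (n + p ^ L) (k + 1) - 1 =
        windowCount (p ^ e ∣ b + · * a) n (k + 1) - 1 := fun e he =>
      congrArg (· - 1) (((hc e).of_dvd (pow_dvd_pow p (mem_Icc.1 he).2)) n)
    have hpk : p ^ (L + 1) ≤ k + 1 := hL ▸ (Nat.pow_log_le_self p hk).trans (le_succ k)
    have h1 := one_le_windowCount_dvd_add_mul (b := b) (pow_ne_zero _ hp.ne_zero) (hcop _) hpk n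
    have h2 := one_le_windowCount_dvd_add_mul (b := b) (pow_ne_zero _ hp.ne_zero) (hcop _) hpk
      (n + p ^ L)
    simp only [F, sum_Icc_succ_top (by omega : 1 ≤ L + 1), sum_congr rfl hlow] at hF
    simp only
    omega
  have hW : Periodic (windowCount (p ^ (L + 1) ∣ b + · * a) · (p ^ L)) (p ^ L) :=
    (periodic_windowCount periodic_dvd_add_mul _).prime_pow_of_not_dvd hp
      (periodic_windowCount_swap hcL) hkp
  have hone := windowCount_nat_mul hW p 0
  rw [← pow_succ', windowCount_dvd_add_mul_self (pow_ne_zero _ hp.ne_zero) (hcop _)] at hone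
  exact hp.one_lt.ne' (Nat.eq_one_of_mul_eq_one_right hone.symm)

theorem isLeast_period (ha : 0 < a) (hab : Coprime a b) :
    IsLeast {T | 0 < T ∧ ∀ n, 1 ≤ n → prodDivLcm k a b (n + T) = prodDivLcm k a b n}
      (∏ p ∈ periodPrimes k a, p ^ log p k) := by
  have hprime : ∀ p ∈ periodPrimes k a, p.Prime := fun p hp => (mem_periodPrimes.1 hp).1
  refine ⟨⟨prod_pos fun p hp => pow_pos (hprime p hp).pos _, fun n hn =>
    prodDivLcm_add_of_forall_dvd ha hab (fun p hp => dvd_prod_of_mem _ hp) hn⟩, ?_⟩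
  rintro T ⟨hT0, hT⟩
  refine Nat.le_of_dvd hT0 (prod_dvd_of_isRelPrime (fun p hp q hq hpq => ?_) fun p hp => ?_)
  · exact Nat.coprime_iff_isRelPrime.1 (Nat.coprime_pow_primes _ _ (hprime p hp) (hprime q hq) hpq)
  · obtain ⟨hp, -, hpa, hkp⟩ := mem_periodPrimes.1 hp
    exact pow_log_dvd_of_forall_prodDivLcm_add ha hp hpa hkp hT

end prodDivLcm

section Exceptional

variable {k a : ℕ}

theorem mem_exceptionalPrimes {p : ℕ} : p ∈ exceptionalPrimes k a ↔
    p.Prime ∧ p ≤ k ∧ ¬ p ∣ a ∧ log p k ≤ padicValNat p (k + 1) := by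
  simp only [exceptionalPrimes, mem_filter, mem_primesLE]
  refine ⟨fun ⟨⟨hpk, hp⟩, hpa, hdvd⟩ => ⟨hp, hpk, hpa, ?_⟩,
    fun ⟨hp, hpk, hpa, hv⟩ => ⟨⟨hpk, hp⟩, hpa, ?_⟩⟩ <;> have : Fact p.Prime := ⟨hp⟩
  · exact (padicValNat_dvd_iff_le (succ_ne_zero k)).1 hdvd
  · exact (padicValNat_dvd_iff_le (succ_ne_zero k)).2 hv

theorem pow_log_le_of_pow_log_dvd_succ {p q : ℕ} (hp : p.Prime) (hq : q.Prime) (hpq : p ≠ q)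
    (hpk : p ^ log p k ∣ k + 1) (hqk : q ^ log q k ∣ k + 1) : q ^ log q k ≤ p := by
  have h1 : p ^ log p k * q ^ log q k ≤ k + 1 := Nat.le_of_dvd (succ_pos k)
    ((Nat.coprime_pow_primes _ _ hp hq hpq).mul_dvd_of_dvd_of_dvd hpk hqk)
  have h2 : k + 1 ≤ p ^ log p k * p := by
    rw [← pow_succ]
    exact Nat.lt_pow_succ_log_self hp.one_lt k
  exact Nat.le_of_mul_le_mul_left (h1.trans h2) (pow_pos hp.pos _)

theorem card_exceptionalPrimes_le_one : #(exceptionalPrimes k a) ≤ 1 := by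
  refine card_le_one.2 fun p hp q hq => ?_
  simp only [exceptionalPrimes, mem_filter, mem_primesLE] at hp hq
  obtain ⟨⟨hpk, hp⟩, -, hpk'⟩ := hp
  obtain ⟨⟨hqk, hq⟩, -, hqk'⟩ := hq
  by_contra hpq
  have hqp := pow_log_le_of_pow_log_dvd_succ hp hq hpq hpk' hqk'
  have hpq' := pow_log_le_of_pow_log_dvd_succ hq hp (Ne.symm hpq) hqk' hpk'
  have := le_self_pow hp.one_le (Nat.log_pos hp.one_lt hpk).ne'
  have := le_self_pow hq.one_le (Nat.log_pos hq.one_lt hqk).ne'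
  omega

theorem prod_exceptionalPrimes_cases (k a : ℕ) :
    (∃ p : ℕ, p.Prime ∧ p ≤ k ∧ ¬ p ∣ a ∧ log p k ≤ padicValNat p (k + 1) ∧
        ∏ q ∈ exceptionalPrimes k a, q ^ log q k = p ^ log p k) ∨
      ((¬ ∃ p : ℕ, p.Prime ∧ p ≤ k ∧ ¬ p ∣ a ∧ log p k ≤ padicValNat p (k + 1)) ∧
        ∏ q ∈ exceptionalPrimes k a, q ^ log q k = 1) := by
  rcases (exceptionalPrimes k a).eq_empty_or_nonempty with h | ⟨p, hp⟩
  · exact .inr ⟨fun ⟨p, hp⟩ => by simpa [h] using mem_exceptionalPrimes.2 hp, by simp [h]⟩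
  · have hE : exceptionalPrimes k a = {p} := eq_singleton_iff_unique_mem.2
      ⟨hp, fun q hq => card_le_one.1 card_exceptionalPrimes_le_one q hq p hp⟩
    obtain ⟨hp, hpk, hpa, hv⟩ := mem_exceptionalPrimes.1 hp
    exact .inl ⟨p, hp, hpk, hpa, hv, by rw [hE, prod_singleton]⟩

theorem lcmUpto_eq_mul_prod_periodPrimes (ha : a ≠ 0) :
    lcmUpto k = (∏ q ∈ exceptionalPrimes k a, q ^ log q k) *
      (∏ q ∈ (Nat.gcd a (lcmUpto k)).primeFactors, q ^ log q k) *
        ∏ q ∈ periodPrimes k a, q ^ log q k := by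
  have hA : (Nat.gcd a (lcmUpto k)).primeFactors = {p ∈ primesLE k | p ∣ a} := by
    rw [Nat.primeFactors_gcd ha (lcmUpto_ne_zero k), primeFactors_lcmUpto]
    ext p
    simp only [mem_inter, mem_primeFactors, mem_filter, mem_primesLE]
    tauto
  rw [hA, mul_comm (∏ q ∈ exceptionalPrimes k a, _), mul_assoc, exceptionalPrimes, periodPrimes,
    ← filter_filter, ← filter_filter, prod_filter_mul_prod_filter_not,
    prod_filter_mul_prod_filter_not, lcmUpto_eq_prod_pow_log]

end Exceptional

theorem stmt18_general (k a b : ℕ) (ha : 1 ≤ a) (hab : Nat.gcd a b = 1)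
    (P : ℕ)
    (hP : IsLeast {T : ℕ | 0 < T ∧ ∀ n : ℕ, 1 ≤ n →
      (∏ i ∈ Finset.range (k+1), (b + (n + T + i) * a)) /
          (Finset.range (k+1)).lcm (fun i => b + (n + T + i) * a) =
        (∏ i ∈ Finset.range (k+1), (b + (n + i) * a)) /
          (Finset.range (k+1)).lcm (fun i => b + (n + i) * a)} P) :
    ∃ δ : ℕ,
      ((∃ p : ℕ, p.Prime ∧ p ≤ k ∧ ¬ p ∣ a ∧ Nat.log p k ≤ padicValNat p (k + 1) ∧
          δ = p ^ Nat.log p k) ∨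
        ((¬ ∃ p : ℕ, p.Prime ∧ p ≤ k ∧ ¬ p ∣ a ∧ Nat.log p k ≤ padicValNat p (k + 1)) ∧
          δ = 1)) ∧
      P = (Finset.Icc 1 k).lcm id /
        (δ * ∏ q ∈ (Nat.gcd a ((Finset.Icc 1 k).lcm id)).primeFactors, q ^ Nat.log q k) := by
  have hPeq : P = ∏ p ∈ periodPrimes k a, p ^ log p k := hP.unique (isLeast_period ha hab)
  have hlcm := lcmUpto_eq_mul_prod_periodPrimes (k := k) (Nat.pos_iff_ne_zero.1 ha)
  refine ⟨_, prod_exceptionalPrimes_cases k a, ?_⟩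
  rw [hPeq]
  exact (Nat.div_eq_of_eq_mul_right
    (Nat.pos_of_ne_zero (left_ne_zero_of_mul (hlcm ▸ lcmUpto_ne_zero k))) hlcm).symm

theorem stmt18 (k a b : ℕ) (hk : 2 ≤ k) (ha : 1 ≤ a) (hab : Nat.gcd a b = 1)
    (P : ℕ)
    (hP : IsLeast {T : ℕ | 0 < T ∧ ∀ n : ℕ, 1 ≤ n →
      (∏ i ∈ Finset.range (k+1), (b + (n + T + i) * a)) /
          (Finset.range (k+1)).lcm (fun i => b + (n + T + i) * a) =
        (∏ i ∈ Finset.range (k+1), (b + (n + i) * a)) /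
          (Finset.range (k+1)).lcm (fun i => b + (n + i) * a)} P) :
    ∃ δ : ℕ,
      ((∃ p : ℕ, p.Prime ∧ p ≤ k ∧ ¬ p ∣ a ∧ Nat.log p k ≤ padicValNat p (k + 1) ∧
          δ = p ^ Nat.log p k) ∨
        ((¬ ∃ p : ℕ, p.Prime ∧ p ≤ k ∧ ¬ p ∣ a ∧ Nat.log p k ≤ padicValNat p (k + 1)) ∧
          δ = 1)) ∧
      P = (Finset.Icc 1 k).lcm id /
        (δ * ∏ q ∈ (Nat.gcd a ((Finset.Icc 1 k).lcm id)).primeFactors, q ^ Nat.log q k) :=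
  stmt18_general k a b ha hab P hP
end
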